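/- Let x, x⋆ ∈ ℝⁿ and s ≥ 1, and suppose there are at least s indices i with x_i ≠ 0 and x⋆_i = 0. Then there exists a vector z̄ ∈ ℝⁿ with the following properties: ‖z̄‖₀ = s, ‖z̄‖₂ = √s, ⟨z̄, x⋆⟩ = 0, ⟨z̄, x⟩ > 0, and ⟨z̄, z⟩ = s for every subgradient z ∈ ∂‖x‖₁. -/
import Mathlib


noncomputable section

/-- Euclidean dot product on `Fin n → ℝ`. -/
def dotp {n : ℕ} (x y : Fin n → ℝ) : ℝ := ∑ i, x i * y i

/-- Euclidean (ℓ₂) norm. -/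
def l2norm {n : ℕ} (x : Fin n → ℝ) : ℝ := Real.sqrt (∑ i, x i ^ 2)

/-- ℓ₀ "norm": number of nonzero entries. -/
def l0 {n : ℕ} (x : Fin n → ℝ) : ℕ := (Finset.univ.filter (fun i => x i ≠ 0)).card

/-- The subdifferential of the ℓ₁-norm at `x`:
`{ g : g_i = sign(x_i) on supp(x), |g_i| ≤ 1 elsewhere }`. -/
def l1Subdiff {n : ℕ} (x : Fin n → ℝ) : Set (Fin n → ℝ) :=
  {g | ∀ i, (x i ≠ 0 → g i = Real.sign (x i)) ∧ (x i = 0 → |g i| ≤ 1)}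

end

lemma sign_sq_of_ne {a : ℝ} (ha : a ≠ 0) : Real.sign a * Real.sign a = 1 := by
  rcases ha.lt_or_gt with h | h
  · rw [Real.sign_of_neg h]; norm_num
  · rw [Real.sign_of_pos h]; norm_num

lemma sign_mul_pos_of_ne {a : ℝ} (ha : a ≠ 0) : 0 < Real.sign a * a := by
  rcases ha.lt_or_gt with h | h
  · rw [Real.sign_of_neg h]; nlinarith
  · rw [Real.sign_of_pos h]; nlinarith

/-- if there are at least `s ≥ 1` indices `i` with `x_i ≠ 0` and `x⋆_i = 0`,
then there is a vector `z̄` with `‖z̄‖₀ = s`, `‖z̄‖₂ = √s`, `⟨z̄, x⋆⟩ = 0`, `⟨z̄, x⟩ > 0`, and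
`⟨z̄, z⟩ = s` for every subgradient `z ∈ ∂‖x‖₁`. -/
theorem stmt8 {n : ℕ} (x xstar : Fin n → ℝ) (s : ℕ) (hs : 1 ≤ s)
    (h : s ≤ (Finset.univ.filter (fun i => x i ≠ 0 ∧ xstar i = 0)).card) :
    ∃ zbar : Fin n → ℝ,
      l0 zbar = s ∧
      l2norm zbar = Real.sqrt s ∧
      dotp zbar xstar = 0 ∧
      0 < dotp zbar x ∧
      ∀ z ∈ l1Subdiff x, dotp zbar z = s := by
  obtain ⟨T, hTsub, hTcard⟩ := Finset.exists_subset_card_eq h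
  have hT : ∀ i ∈ T, x i ≠ 0 ∧ xstar i = 0 := by
    intro i hi
    have := hTsub hi
    simpa using this
  refine ⟨fun i => if i ∈ T then Real.sign (x i) else 0, ?_, ?_, ?_, ?_, ?_⟩
  · rw [l0, ← hTcard]
    congr 1
    ext i
    simp only [Finset.mem_filter, Finset.mem_univ, true_and]
    constructor
    · intro hi
      by_contra hiT
      simp [hiT] at hi
    · intro hi
      have hx := (hT i hi).1
      simp [hi, Real.sign_eq_zero_iff, hx]
  · rw [l2norm]
    congr 1
    rw [← Finset.sum_subset (Finset.subset_univ T)]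
    · rw [← hTcard]
      rw [Finset.card_eq_sum_ones T, Nat.cast_sum]
      apply Finset.sum_congr rfl
      intro i hi
      have := sign_sq_of_ne (hT i hi).1
      simp [hi, sq]
      linarith
    · intro i _ hi
      simp [hi]
  · rw [dotp]
    apply Finset.sum_eq_zero
    intro i _
    by_cases hi : i ∈ T
    · simp [hi, (hT i hi).2]
    · simp [hi]
  · rw [dotp, ← Finset.sum_subset (Finset.subset_univ T)]
    · apply Finset.sum_pos
      · intro i hi
        simp only [hi, if_true]
        exact sign_mul_pos_of_ne (hT i hi).1
      · rw [← Finset.card_pos, hTcard]; omega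
    · intro i _ hi
      simp [hi]
  · intro z hz
    rw [dotp, ← Finset.sum_subset (Finset.subset_univ T)]
    · rw [← hTcard, Finset.card_eq_sum_ones T, Nat.cast_sum]
      apply Finset.sum_congr rfl
      intro i hi
      have hx := (hT i hi).1
      have hzz := (hz i).1 hx
      simp only [hi, if_true, hzz, Nat.cast_one]
      exact sign_sq_of_ne hx
    · intro i _ hi
      simp [hi]
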